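/- arXiv:1707.04014 — 2 statements merged into one kernel-verified Lean document; each statement's English description precedes it below -/
import Mathlib

section
/- Let Ω ⊂ ℝ² be a compact connected region with smooth boundary ∂Ω, and let (p,q) : [0,T) → ∂Ω × ∂Ω be a chord shortening flow relative to ∂Ω. Then d/dt Θ̄ = (1/ℓ)(‖Θ‖² − 1 − ⟨ξ(p), ξ(q)⟩)·Θ̄ + k(p)·⟨−η(p), ν(p)⟩·Θ(p) + k(q)·⟨−η(q), ν(q)⟩·Θ(q), where ℓ = ℓ(t) = |p(t) − q(t)|. -/
open scoped RealInnerProductSpace ENNReal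
open Set Filter

noncomputable section

/-- Euclidean `n`-space. -/
abbrev Euc (n : ℕ) := EuclideanSpace ℝ (Fin n)

/-- The orthogonal projection `π_K` onto a submodule `K`, as a map `Euc n → Euc n`. -/
def projSM {n : ℕ} (K : Submodule ℝ (Euc n)) (v : Euc n) : Euc n :=
  (K.orthogonalProjectionOnto v : Euc n)

/-- `S` is a smooth embedded `k`-dimensional submanifold (without boundary) of `ℝⁿ`,
whose tangent space at each `x ∈ S` is the `k`-dimensional subspace `T x ⊆ ℝⁿ`:
every point of `S` has a neighbourhood in `S` which is the image of a smooth injective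
parametrization, which is a homeomorphism onto its image, with injective differential whose
range is the assigned tangent space. -/
def IsSubmanifold (n k : ℕ) (S : Set (Euc n)) (T : Euc n → Submodule ℝ (Euc n)) : Prop :=
  ∀ x ∈ S, ∃ (f : Euc k → Euc n) (u : Set (Euc k)) (v : Set (Euc n)),
    IsOpen u ∧ IsOpen v ∧ x ∈ v ∧ ContDiffOn ℝ (⊤ : ℕ∞) f u ∧ Set.InjOn f u ∧
    f '' u = S ∩ v ∧
    (∀ s ⊆ u, IsOpen s → ∃ w : Set (Euc n), IsOpen w ∧ f '' s = S ∩ w) ∧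
    ∀ y ∈ u, Function.Injective (fderiv ℝ f y) ∧
      LinearMap.range ((fderiv ℝ f y) : Euc k →ₗ[ℝ] Euc n) = T (f y)

/-- The tangential part `η^T(x) = π_{T x}((x - y)/|x - y|)` of the outward unit conormal at `x`
of the chord from `x` to `y`. -/
def conormalT {n : ℕ} (T : Euc n → Submodule ℝ (Euc n)) (x y : Euc n) : Euc n :=
  projSM (T x) (‖x - y‖⁻¹ • (x - y))

/-- A chord shortening flow relative to `S` (with tangent spaces `T`) on the time domain `dom`:
a pair of C¹ curves `p q : dom → S` with `p t ≠ q t`, satisfying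
`p' = -π_{p}((p-q)/|p-q|)` and `q' = -π_{q}((q-p)/|q-p|)`. -/
def IsCSFOn {n : ℕ} (S : Set (Euc n)) (T : Euc n → Submodule ℝ (Euc n))
    (dom : Set ℝ) (p q : ℝ → Euc n) : Prop :=
  ∀ t ∈ dom, p t ∈ S ∧ q t ∈ S ∧ p t ≠ q t ∧
    HasDerivWithinAt p (-(conormalT T (p t) (q t))) dom t ∧
    HasDerivWithinAt q (-(conormalT T (q t) (p t))) dom t

/-- The time interval `[0, Tm)` (where possibly `Tm = ∞`). -/
def csfDomain (Tm : ℝ≥0∞) : Set ℝ := {t : ℝ | 0 ≤ t ∧ ENNReal.ofReal t < Tm}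

/-- A maximal chord shortening flow: one defined on `[0, Tm)` which cannot be extended to a
chord shortening flow on a strictly larger interval `[0, Tm')`. -/
def IsMaximalCSF {n : ℕ} (S : Set (Euc n)) (T : Euc n → Submodule ℝ (Euc n))
    (Tm : ℝ≥0∞) (p q : ℝ → Euc n) : Prop :=
  IsCSFOn S T (csfDomain Tm) p q ∧
  ∀ Tm' : ℝ≥0∞, Tm < Tm' → ∀ p' q' : ℝ → Euc n,
    IsCSFOn S T (csfDomain Tm') p' q' →
    ¬ (∀ t ∈ csfDomain Tm, p' t = p t ∧ q' t = q t)

/-- Counterclockwise rotation by `π/2` in the plane. -/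
def Jrot (v : Euc 2) : Euc 2 := WithLp.toLp 2 ![-(v 1), v 0]

/-- The boundary angle `Θ(p) = ⟨η(p), ξ(p)⟩` at the first endpoint of the oriented chord
from `p` to `q`, where `η(p) = (p-q)/|p-q|` and `ξ` is the orientation field. -/
def thetaP (ξ : Euc 2 → Euc 2) (p q : Euc 2) : ℝ := ⟪‖p - q‖⁻¹ • (p - q), ξ p⟫

/-- The boundary angle `Θ(q) = -⟨η(q), ξ(q)⟩` at the second endpoint of the oriented chord
from `p` to `q`, where `η(q) = (q-p)/|q-p|` and `ξ` is the orientation field. -/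
def thetaQ (ξ : Euc 2 → Euc 2) (p q : Euc 2) : ℝ := -⟪‖q - p‖⁻¹ • (q - p), ξ q⟫

/-! Since `∂Ω` is a curve, its tangent line at `x` is `ℝ ξ(x)`, so the flow moves the endpoints
with velocities `-Θ(p) ξ(p)` and `Θ(q) ξ(q)`. Differentiating `|ξ| = 1` along an endpoint kills
the tangential part of `Dξ`, so `ξ` evolves along it by `(speed) · k · Jξ`. Finally
`Θ̄ = ⟨η, ξ(p) + ξ(q)⟩` with `η = (p - q)/ℓ`, whose derivative is `ℓ⁻¹ (u' - ⟨η, u'⟩ η)` for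
`u = p - q`; the product rule and `Θ(p) = ⟨η, ξ(p)⟩`, `Θ(q) = ⟨η, ξ(q)⟩` give the formula. -/

section Calculus

variable {F : Type*} [NormedAddCommGroup F] [InnerProductSpace ℝ F]
  {u : ℝ → F} {u' : F} {s : Set ℝ} {t : ℝ}

theorem HasDerivWithinAt.inner_eq_zero_of_forall_norm_eq_one (hu : HasDerivWithinAt u u' s t)
    (hs : UniqueDiffWithinAt ℝ s t) (ht : t ∈ s) (h1 : ∀ x ∈ s, ‖u x‖ = 1) :
    ⟪u t, u'⟫ = 0 := by
  have hconst : HasDerivWithinAt (‖u ·‖ ^ 2) 0 s t :=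
    (hasDerivWithinAt_const t s 1).congr (fun x hx => by simp [h1 x hx]) (by simp [h1 t ht])
  have := hs.eq_deriv s hu.norm_sq hconst
  linarith

theorem HasDerivWithinAt.norm (hu : HasDerivWithinAt u u' s t) (h0 : u t ≠ 0) :
    HasDerivWithinAt (‖u ·‖) (⟪u t, u'⟫ / ‖u t‖) s t := by
  have h := hu.norm_sq.sqrt (by simpa using h0)
  simp only [Real.sqrt_sq (norm_nonneg _)] at h
  convert h using 1
  field_simp

theorem HasDerivWithinAt.inv_norm_smul (hu : HasDerivWithinAt u u' s t) (h0 : u t ≠ 0) :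
    HasDerivWithinAt (fun x => ‖u x‖⁻¹ • u x)
      (‖u t‖⁻¹ • (u' - ⟪‖u t‖⁻¹ • u t, u'⟫ • (‖u t‖⁻¹ • u t))) s t := by
  have hℓ : ‖u t‖ ≠ 0 := norm_ne_zero_iff.2 h0
  refine (((hu.norm h0).inv hℓ).smul hu).congr_deriv ?_
  rw [Pi.inv_apply, smul_sub, real_inner_smul_left, smul_smul, smul_smul, sub_eq_add_neg,
    ← neg_smul]
  congr 2
  field_simp

end Calculus

theorem eq_inner_smul_add_inner_Jrot_smul {e : Euc 2} (he : ‖e‖ = 1) (w : Euc 2) :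
    w = ⟪w, e⟫ • e + ⟪w, Jrot e⟫ • Jrot e := by
  have h1 : e 0 * e 0 + e 1 * e 1 = 1 := by
    have h := real_inner_self_eq_norm_sq e
    rw [he, one_pow] at h
    rw [← h]
    simp only [PiLp.inner_apply, Fin.sum_univ_two, RCLike.inner_apply, conj_trivial]
  ext i
  fin_cases i <;>
    simp only [Fin.zero_eta, Fin.mk_one, Fin.isValue, PiLp.inner_apply, RCLike.inner_apply,
      Real.ringHom_apply, Fin.sum_univ_two, Jrot, Matrix.cons_val_zero, Matrix.cons_val_one,
      Matrix.cons_val_fin_one, PiLp.add_apply, PiLp.smul_apply, smul_eq_mul]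
  · linear_combination (-(w 0)) * h1
  · linear_combination (-(w 1)) * h1

theorem IsSubmanifold.finrank_eq {n k : ℕ} {S : Set (Euc n)} {T : Euc n → Submodule ℝ (Euc n)}
    (hS : IsSubmanifold n k S T) {x : Euc n} (hx : x ∈ S) : Module.finrank ℝ (T x) = k := by
  obtain ⟨f, u, v, -, -, hxv, -, -, hfu, -, hdf⟩ := hS x hx
  obtain ⟨y, hyu, rfl⟩ : x ∈ f '' u := hfu ▸ ⟨hx, hxv⟩
  obtain ⟨hinj, hrange⟩ := hdf y hyu
  rw [← hrange, LinearMap.finrank_range_of_inj hinj, finrank_euclideanSpace_fin]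

theorem IsSubmanifold.eq_span_singleton {n : ℕ} {S : Set (Euc n)}
    {T : Euc n → Submodule ℝ (Euc n)} (hS : IsSubmanifold n 1 S T) {x v : Euc n} (hx : x ∈ S)
    (hv : v ∈ T x) (hv0 : v ≠ 0) : T x = ℝ ∙ v :=
  eq_span_singleton_of_mem_of_finrank_eq_one (hS.finrank_eq hx) hv hv0

theorem projSM_span_singleton {n : ℕ} {e : Euc n} (he : ‖e‖ = 1) (w : Euc n) :
    projSM (ℝ ∙ e) w = ⟪e, w⟫ • e := by
  rw [projSM, ← Submodule.starProjection_apply, Submodule.starProjection_unit_singleton ℝ he]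

theorem uniqueDiffOn_csfDomain (Tm : ℝ≥0∞) : UniqueDiffOn ℝ (csfDomain Tm) := by
  rintro t ⟨ht0, htm⟩
  obtain ⟨m, htm', hm⟩ := exists_between htm
  have hm_top : m ≠ ⊤ := hm.ne_top
  have hIco : Ico t m.toReal ⊆ csfDomain Tm := fun x hx =>
    ⟨ht0.trans hx.1, ((ENNReal.ofReal_lt_iff_lt_toReal (ht0.trans hx.1) hm_top).2 hx.2).trans hm⟩
  exact (uniqueDiffOn_Ico t m.toReal t
    ⟨le_rfl, (ENNReal.ofReal_lt_iff_lt_toReal ht0 hm_top).1 htm'⟩).mono hIco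

theorem thetaQ_eq_inner (ξ : Euc 2 → Euc 2) (p q : Euc 2) :
    thetaQ ξ p q = ⟪‖p - q‖⁻¹ • (p - q), ξ q⟫ := by
  rw [thetaQ, ← neg_sub p q, norm_neg, smul_neg, inner_neg_left, neg_neg]

theorem IsCSFOn.hasDerivWithinAt_theta {S : Set (Euc 2)} {T : Euc 2 → Submodule ℝ (Euc 2)}
    {ξ : Euc 2 → Euc 2} {dom : Set ℝ} {p q : ℝ → Euc 2} (hflow : IsCSFOn S T dom p q)
    (hT : ∀ x ∈ S, T x = ℝ ∙ ξ x) (hξ : ∀ x ∈ S, ‖ξ x‖ = 1) {t : ℝ} (ht : t ∈ dom) :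
    HasDerivWithinAt p (-thetaP ξ (p t) (q t) • ξ (p t)) dom t ∧
      HasDerivWithinAt q (thetaQ ξ (p t) (q t) • ξ (q t)) dom t := by
  obtain ⟨hpS, hqS, -, hp, hq⟩ := hflow t ht
  rw [conormalT, hT _ hpS, projSM_span_singleton (hξ _ hpS)] at hp
  rw [conormalT, hT _ hqS, projSM_span_singleton (hξ _ hqS)] at hq
  rw [thetaP, thetaQ, real_inner_comm (ξ (p t)), real_inner_comm (ξ (q t))]
  exact ⟨by rwa [neg_smul], by rwa [← neg_smul] at hq⟩

theorem HasDerivWithinAt.unit_field_comp {S : Set (Euc 2)} {ξ : Euc 2 → Euc 2}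
    {dξ : Euc 2 →L[ℝ] Euc 2} {γ : ℝ → Euc 2} {s : Set ℝ} {t c κ : ℝ}
    (hγ : HasDerivWithinAt γ (c • ξ (γ t)) s t) (hγS : MapsTo γ s S)
    (hs : UniqueDiffWithinAt ℝ s t) (ht : t ∈ s) (hξ : ∀ x ∈ S, ‖ξ x‖ = 1)
    (hdξ : HasFDerivWithinAt ξ dξ S (γ t)) (hκ : κ = ⟪dξ (ξ (γ t)), Jrot (ξ (γ t))⟫) :
    HasDerivWithinAt (ξ ∘ γ) ((c * κ) • Jrot (ξ (γ t))) s t := by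
  have h := hdξ.comp_hasDerivWithinAt t hγ hγS
  have htangential : ⟪dξ (c • ξ (γ t)), ξ (γ t)⟫ = 0 := by
    rw [real_inner_comm]
    exact h.inner_eq_zero_of_forall_norm_eq_one hs ht fun x hx => hξ _ (hγS hx)
  refine h.congr_deriv ?_
  rw [eq_inner_smul_add_inner_Jrot_smul (hξ _ (hγS ht)) (dξ (c • ξ (γ t))), htangential,
    zero_smul, zero_add, map_smul, real_inner_smul_left, hκ]

theorem hasDerivWithinAt_thetaP_add_thetaQ {ξ : Euc 2 → Euc 2} {p q : ℝ → Euc 2} {s : Set ℝ}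
    {t κp κq : ℝ} (hpq : p t ≠ q t) (hξp1 : ‖ξ (p t)‖ = 1) (hξq1 : ‖ξ (q t)‖ = 1)
    (hp : HasDerivWithinAt p (-thetaP ξ (p t) (q t) • ξ (p t)) s t)
    (hq : HasDerivWithinAt q (thetaQ ξ (p t) (q t) • ξ (q t)) s t)
    (hξp : HasDerivWithinAt (ξ ∘ p) ((-thetaP ξ (p t) (q t) * κp) • Jrot (ξ (p t))) s t)
    (hξq : HasDerivWithinAt (ξ ∘ q) ((thetaQ ξ (p t) (q t) * κq) • Jrot (ξ (q t))) s t) :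
    HasDerivWithinAt (fun s => thetaP ξ (p s) (q s) + thetaQ ξ (p s) (q s))
      (‖p t - q t‖⁻¹ *
          ((thetaP ξ (p t) (q t) ^ 2 + thetaQ ξ (p t) (q t) ^ 2)
            - 1 - ⟪ξ (p t), ξ (q t)⟫) *
          (thetaP ξ (p t) (q t) + thetaQ ξ (p t) (q t))
        + κp * ⟪-(‖p t - q t‖⁻¹ • (p t - q t)), Jrot (ξ (p t))⟫ * thetaP ξ (p t) (q t)
        + κq * ⟪-(‖q t - p t‖⁻¹ • (q t - p t)), Jrot (ξ (q t))⟫ * thetaQ ξ (p t) (q t))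
      s t := by
  have hη := (hp.sub hq).inv_norm_smul (sub_ne_zero.2 hpq)
  have h := (hη.inner ℝ hξp).add (hη.inner ℝ hξq)
  have hΘ : (fun s => thetaP ξ (p s) (q s) + thetaQ ξ (p s) (q s)) =
      (fun s => ⟪‖(p - q) s‖⁻¹ • (p - q) s, (ξ ∘ p) s⟫) +
        fun s => ⟪‖(p - q) s‖⁻¹ • (p - q) s, (ξ ∘ q) s⟫ := by
    funext s
    rw [thetaQ_eq_inner]
    rfl
  rw [hΘ]
  refine h.congr_deriv ?_
  simp only [Pi.sub_apply, Function.comp_apply]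
  rw [← neg_sub (p t) (q t), norm_neg, smul_neg, neg_neg]
  set η := ‖p t - q t‖⁻¹ • (p t - q t)
  have hΘp : ⟪η, ξ (p t)⟫ = thetaP ξ (p t) (q t) := rfl
  have hΘq : ⟪η, ξ (q t)⟫ = thetaQ ξ (p t) (q t) := (thetaQ_eq_inner ξ _ _).symm
  have hpp : ⟪ξ (p t), ξ (p t)⟫ = 1 := by rw [real_inner_self_eq_norm_sq, hξp1, one_pow]
  have hqq : ⟪ξ (q t), ξ (q t)⟫ = 1 := by rw [real_inner_self_eq_norm_sq, hξq1, one_pow]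
  simp only [inner_sub_left, inner_sub_right, inner_neg_left,
    real_inner_smul_left, real_inner_smul_right, hΘp, hΘq, hpp, hqq,
    real_inner_comm (ξ (p t)) (ξ (q t))]
  ring

theorem chord_statement_13_general
    (Ω : Set (Euc 2))
    (T : Euc 2 → Submodule ℝ (Euc 2)) (hsub : IsSubmanifold 2 1 (frontier Ω) T)
    (ξ : Euc 2 → Euc 2)
    (hξ : ∀ x ∈ frontier Ω, ξ x ∈ T x ∧ ‖ξ x‖ = 1 ∧
      ∃ ε : ℝ, 0 < ε ∧ ∀ s : ℝ, 0 < s → s < ε → x + s • Jrot (ξ x) ∈ interior Ω)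
    (κ : Euc 2 → ℝ)
    (hκ : ∀ x ∈ frontier Ω, ∃ dξ : Euc 2 →L[ℝ] Euc 2,
      HasFDerivWithinAt ξ dξ (frontier Ω) x ∧ κ x = ⟪dξ (ξ x), Jrot (ξ x)⟫)
    (Tm : ℝ≥0∞) (p q : ℝ → Euc 2)
    (hflow : IsCSFOn (frontier Ω) T (csfDomain Tm) p q) :
    ∀ t ∈ csfDomain Tm,
      HasDerivWithinAt (fun s => thetaP ξ (p s) (q s) + thetaQ ξ (p s) (q s))
        (‖p t - q t‖⁻¹ *
            ((thetaP ξ (p t) (q t) ^ 2 + thetaQ ξ (p t) (q t) ^ 2)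
              - 1 - ⟪ξ (p t), ξ (q t)⟫) *
            (thetaP ξ (p t) (q t) + thetaQ ξ (p t) (q t))
          + κ (p t) * ⟪-(‖p t - q t‖⁻¹ • (p t - q t)), Jrot (ξ (p t))⟫ * thetaP ξ (p t) (q t)
          + κ (q t) * ⟪-(‖q t - p t‖⁻¹ • (q t - p t)), Jrot (ξ (q t))⟫ * thetaQ ξ (p t) (q t))
        (csfDomain Tm) t := by
  intro t ht
  have hξ1 : ∀ x ∈ frontier Ω, ‖ξ x‖ = 1 := fun x hx => (hξ x hx).2.1
  have hT : ∀ x ∈ frontier Ω, T x = ℝ ∙ ξ x := fun x hx =>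
    hsub.eq_span_singleton hx (hξ x hx).1 (ne_zero_of_norm_ne_zero (by simp [hξ1 x hx]))
  obtain ⟨hpS, hqS, hpq, -, -⟩ := hflow t ht
  obtain ⟨hp, hq⟩ := hflow.hasDerivWithinAt_theta hT hξ1 ht
  have hud := uniqueDiffOn_csfDomain Tm t ht
  obtain ⟨dξp, hdξp, hκp⟩ := hκ (p t) hpS
  obtain ⟨dξq, hdξq, hκq⟩ := hκ (q t) hqS
  exact hasDerivWithinAt_thetaP_add_thetaQ hpq (hξ1 _ hpS) (hξ1 _ hqS) hp hq
    (hp.unit_field_comp (fun s hs => (hflow s hs).1) hud ht hξ1 hdξp hκp)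
    (hq.unit_field_comp (fun s hs => (hflow s hs).2.1) hud ht hξ1 hdξq hκq)

/-- **Evolution of `Θ̄ = Θ(p) + Θ(q)`** under the chord shortening flow relative to the smooth
boundary of a compact connected planar region:
`dΘ̄/dt = (1/ℓ)(‖Θ‖² - 1 - ⟨ξ(p),ξ(q)⟩)Θ̄ + k(p)⟨-η(p),ν(p)⟩Θ(p) + k(q)⟨-η(q),ν(q)⟩Θ(q)`. -/
theorem chord_statement_13
    (Ω : Set (Euc 2)) (hcpt : IsCompact Ω) (hconn : IsConnected Ω)
    (hreg : Ω = closure (interior Ω))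
    (T : Euc 2 → Submodule ℝ (Euc 2)) (hsub : IsSubmanifold 2 1 (frontier Ω) T)
    (ξ : Euc 2 → Euc 2)
    (hξ : ∀ x ∈ frontier Ω, ξ x ∈ T x ∧ ‖ξ x‖ = 1 ∧
      ∃ ε : ℝ, 0 < ε ∧ ∀ s : ℝ, 0 < s → s < ε → x + s • Jrot (ξ x) ∈ interior Ω)
    (κ : Euc 2 → ℝ)
    (hκ : ∀ x ∈ frontier Ω, ∃ dξ : Euc 2 →L[ℝ] Euc 2,
      HasFDerivWithinAt ξ dξ (frontier Ω) x ∧ κ x = ⟪dξ (ξ x), Jrot (ξ x)⟫)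
    (Tm : ℝ≥0∞) (p q : ℝ → Euc 2)
    (hflow : IsCSFOn (frontier Ω) T (csfDomain Tm) p q) :
    ∀ t ∈ csfDomain Tm,
      HasDerivWithinAt (fun s => thetaP ξ (p s) (q s) + thetaQ ξ (p s) (q s))
        (‖p t - q t‖⁻¹ *
            ((thetaP ξ (p t) (q t) ^ 2 + thetaQ ξ (p t) (q t) ^ 2)
              - 1 - ⟪ξ (p t), ξ (q t)⟫) *
            (thetaP ξ (p t) (q t) + thetaQ ξ (p t) (q t))
          + κ (p t) * ⟪-(‖p t - q t‖⁻¹ • (p t - q t)), Jrot (ξ (p t))⟫ * thetaP ξ (p t) (q t)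
          + κ (q t) * ⟪-(‖q t - p t‖⁻¹ • (q t - p t)), Jrot (ξ (q t))⟫ * thetaQ ξ (p t) (q t))
        (csfDomain Tm) t :=
  chord_statement_13_general Ω T hsub ξ hξ κ hκ Tm p q hflow

end
end

section
/- Let Ω ⊂ ℝ² be a compact connected region with smooth boundary ∂Ω, and let (p,q) : [0,T) → ∂Ω × ∂Ω be a chord shortening flow relative to ∂Ω. Then (1/2) d/dt ‖Θ‖² = (ℓ/2)·⟨ξ(p), ξ(q)⟩·‖Δ^{1/2}Θ‖² + k(p)·⟨−η(p), ν(p)⟩·Θ(p)² + k(q)·⟨−η(q), ν(q)⟩·Θ(q)² + (1/ℓ)(‖Θ‖² − 1 − ⟨ξ(p), ξ(q)⟩)·‖Θ‖², where ℓ = ℓ(t) = |p(t) − q(t)| and ‖Δ^{1/2}Θ‖² = 2(Θ(p) − Θ(q))²/ℓ². -/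
open scoped RealInnerProductSpace ENNReal
open Set Filter

noncomputable section

/-!
The tangent line of `∂Ω` at `x` is spanned by the unit vector `ξ(x)`, so the flow reads
`p' = -Θ(p) ξ(p)`, `q' = Θ(q) ξ(q)`. Since `|ξ| = 1`, the derivative of `ξ` along a boundary curve
is normal, and the definition of `k` turns it into `(ξ ∘ p)' = -Θ(p) k(p) ν(p)`. Differentiating
`Θ(p) = ⟨p - q, ξ(p)⟩ / ℓ`, where `ℓ' = -‖Θ‖²`, gives
`Θ(p)' = k(p)⟨-η(p), ν(p)⟩Θ(p) + (Θ(p)‖Θ‖² - Θ(p) - ⟨ξ(p), ξ(q)⟩Θ(q)) / ℓ`,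
and since `Θ(q)` is `-Θ(p)` of the reversed chord, the same formula holds with `p` and `q`
exchanged. The identity is `Θ(p)Θ(p)' + Θ(q)Θ(q)'` rearranged.
-/

theorem eq_inner_jrot_smul_jrot_of_inner_eq_zero {u w : Euc 2} (hu : ‖u‖ = 1)
    (hw : ⟪w, u⟫ = 0) : w = ⟪w, Jrot u⟫ • Jrot u := by
  have hu2 : ⟪u, u⟫ = 1 := by rw [real_inner_self_eq_norm_sq, hu, one_pow]
  simp only [PiLp.inner_apply, Fin.sum_univ_two, RCLike.inner_apply, conj_trivial] at hu2 hw
  ext i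
  fin_cases i <;> simp [Jrot, PiLp.inner_apply, Fin.sum_univ_two]
  · linear_combination (-(w 0)) * hu2 + u 0 * hw
  · linear_combination (-(w 1)) * hu2 + u 1 * hw

namespace IsSubmanifold

variable {n k : ℕ} {S : Set (Euc n)} {T : Euc n → Submodule ℝ (Euc n)} {x : Euc n}

theorem finrank_tangent (hS : IsSubmanifold n k S T) (hx : x ∈ S) :
    Module.finrank ℝ (T x) = k := by
  obtain ⟨f, u, v, -, -, hxv, -, -, himg, -, hdf⟩ := hS x hx
  obtain ⟨y, hy, rfl⟩ : x ∈ f '' u := himg ▸ ⟨hx, hxv⟩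
  obtain ⟨hinj, hrange⟩ := hdf y hy
  rw [← hrange, LinearMap.finrank_range_of_inj hinj, finrank_euclideanSpace_fin]

theorem tangent_eq_span (hS : IsSubmanifold n 1 S T) (hx : x ∈ S) {u : Euc n} (hu : u ∈ T x)
    (hu0 : u ≠ 0) : T x = ℝ ∙ u :=
  (Submodule.eq_of_le_of_finrank_le (Submodule.span_le.2 (by simpa using hu))
    (by rw [hS.finrank_tangent hx, finrank_span_singleton hu0])).symm

end IsSubmanifold

theorem conormalT_eq_thetaP_smul {T : Euc 2 → Submodule ℝ (Euc 2)} {ξ : Euc 2 → Euc 2}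
    {x : Euc 2} (hT : T x = ℝ ∙ ξ x) (hξ : ‖ξ x‖ = 1) (y : Euc 2) :
    conormalT T x y = thetaP ξ x y • ξ x := by
  rw [conormalT, projSM, hT, ← Submodule.starProjection_apply,
    Submodule.starProjection_unit_singleton ℝ hξ, thetaP, real_inner_comm]

theorem thetaP_eq_inner_div (ξ : Euc 2 → Euc 2) (x y : Euc 2) :
    thetaP ξ x y = ⟪x - y, ξ x⟫ / ‖x - y‖ := by
  rw [thetaP, real_inner_smul_left, div_eq_inv_mul]

theorem thetaQ_eq_inner_div (ξ : Euc 2 → Euc 2) (x y : Euc 2) :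
    thetaQ ξ x y = ⟪x - y, ξ y⟫ / ‖x - y‖ := by
  rw [thetaQ, ← neg_sub x y, norm_neg, smul_neg, inner_neg_left, neg_neg, real_inner_smul_left,
    div_eq_inv_mul]

theorem uniqueDiffWithinAt_csfDomain {Tm : ℝ≥0∞} {t : ℝ} (ht : t ∈ csfDomain Tm) :
    UniqueDiffWithinAt ℝ (csfDomain Tm) t :=
  (uniqueDiffOn_Ici 0 t ht.1).inter
    ((isOpen_lt ENNReal.continuous_ofReal continuous_const).mem_nhds ht.2)

theorem IsCSFOn.swap {n : ℕ} {S : Set (Euc n)} {T : Euc n → Submodule ℝ (Euc n)} {dom : Set ℝ}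
    {p q : ℝ → Euc n} (h : IsCSFOn S T dom p q) : IsCSFOn S T dom q p := fun t ht =>
  let ⟨hp, hq, hpq, hp', hq'⟩ := h t ht
  ⟨hq, hp, hpq.symm, hq', hp'⟩

section Calculus

variable {F : Type*} [NormedAddCommGroup F] [InnerProductSpace ℝ F] {f : ℝ → F} {f' : F}
  {s : Set ℝ} {t : ℝ}

theorem HasDerivWithinAt.inner_eq_zero_of_norm_eq_one (hf : HasDerivWithinAt f f' s t)
    (hs : UniqueDiffWithinAt ℝ s t) (ht : t ∈ s) (h1 : ∀ τ ∈ s, ‖f τ‖ = 1) : ⟪f t, f'⟫ = 0 := by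
  have hconst : HasDerivWithinAt (‖f ·‖ ^ 2) 0 s t :=
    (hasDerivWithinAt_const t s 1).congr (fun τ hτ => by simp [h1 τ hτ]) (by simp [h1 t ht])
  linarith [hs.eq_deriv _ hf.norm_sq hconst]

theorem HasDerivWithinAt.norm_of_ne_zero (hf : HasDerivWithinAt f f' s t) (h0 : f t ≠ 0) :
    HasDerivWithinAt (‖f ·‖) (⟪f t, f'⟫ / ‖f t‖) s t := by
  have hsqrt := hf.norm_sq.sqrt (by positivity)
  simp only [Real.sqrt_sq (norm_nonneg _)] at hsqrt
  convert hsqrt using 1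
  field_simp

end Calculus

theorem hasDerivWithinAt_comp_of_curvature {S : Set (Euc 2)} {ξ : Euc 2 → Euc 2}
    {κ : Euc 2 → ℝ} (hξ : ∀ x ∈ S, ‖ξ x‖ = 1)
    (hκ : ∀ x ∈ S, ∃ dξ : Euc 2 →L[ℝ] Euc 2,
      HasFDerivWithinAt ξ dξ S x ∧ κ x = ⟪dξ (ξ x), Jrot (ξ x)⟫)
    {c : ℝ → Euc 2} {v : ℝ} {s : Set ℝ} {t : ℝ} (hc : HasDerivWithinAt c (v • ξ (c t)) s t)
    (hcS : MapsTo c s S) (hs : UniqueDiffWithinAt ℝ s t) (ht : t ∈ s) :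
    HasDerivWithinAt (fun τ => ξ (c τ)) ((v * κ (c t)) • Jrot (ξ (c t))) s t := by
  obtain ⟨dξ, hdξ, hκc⟩ := hκ (c t) (hcS ht)
  have hd : HasDerivWithinAt (fun τ => ξ (c τ)) (v • dξ (ξ (c t))) s t := by
    have hchain := hdξ.comp_hasDerivWithinAt t hc hcS
    rwa [map_smul] at hchain
  have horth : ⟪v • dξ (ξ (c t)), ξ (c t)⟫ = 0 := by
    rw [real_inner_comm]
    exact hd.inner_eq_zero_of_norm_eq_one hs ht fun τ hτ => hξ _ (hcS hτ)
  rwa [eq_inner_jrot_smul_jrot_of_inner_eq_zero (hξ _ (hcS ht)) horth, real_inner_smul_left,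
    ← hκc] at hd

theorem hasDerivWithinAt_thetaP {ξ : Euc 2 → Euc 2} {κ : Euc 2 → ℝ} {p q : ℝ → Euc 2}
    {s : Set ℝ} {t : ℝ} (hp : HasDerivWithinAt p (-thetaP ξ (p t) (q t) • ξ (p t)) s t)
    (hq : HasDerivWithinAt q (thetaQ ξ (p t) (q t) • ξ (q t)) s t)
    (hξp : HasDerivWithinAt (fun τ => ξ (p τ))
      ((-thetaP ξ (p t) (q t) * κ (p t)) • Jrot (ξ (p t))) s t)
    (hξ : ‖ξ (p t)‖ = 1) (hpq : p t ≠ q t) :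
    HasDerivWithinAt (fun τ => thetaP ξ (p τ) (q τ))
      (κ (p t) * ⟪-(‖p t - q t‖⁻¹ • (p t - q t)), Jrot (ξ (p t))⟫ * thetaP ξ (p t) (q t)
        + ‖p t - q t‖⁻¹ * (thetaP ξ (p t) (q t) *
            (thetaP ξ (p t) (q t) ^ 2 + thetaQ ξ (p t) (q t) ^ 2)
          - thetaP ξ (p t) (q t) - ⟪ξ (p t), ξ (q t)⟫ * thetaQ ξ (p t) (q t))) s t := by
  set Θp := thetaP ξ (p t) (q t)
  set Θq := thetaQ ξ (p t) (q t)
  have hv0 : p t - q t ≠ 0 := sub_ne_zero.2 hpq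
  have hℓ0 : ‖p t - q t‖ ≠ 0 := norm_ne_zero_iff.2 hv0
  have hv : HasDerivWithinAt (fun τ => p τ - q τ) (-Θp • ξ (p t) - Θq • ξ (q t)) s t :=
    hp.sub hq
  have hquot := (hv.inner ℝ hξp).div (hv.norm_of_ne_zero hv0) hℓ0
  refine (hquot.congr (fun τ _ => thetaP_eq_inner_div ξ (p τ) (q τ))
    (thetaP_eq_inner_div ξ (p t) (q t))).congr_deriv ?_
  have hξξ : ⟪ξ (p t), ξ (p t)⟫ = 1 := by rw [real_inner_self_eq_norm_sq, hξ, one_pow]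
  have hξ' : ⟪-Θp • ξ (p t) - Θq • ξ (q t), ξ (p t)⟫ = -Θp - Θq * ⟪ξ (p t), ξ (q t)⟫ := by
    rw [inner_sub_left, real_inner_smul_left, real_inner_smul_left, hξξ,
      real_inner_comm (ξ (p t))]
    ring
  have hℓ' : ⟪p t - q t, -Θp • ξ (p t) - Θq • ξ (q t)⟫
      = -Θp * ⟪p t - q t, ξ (p t)⟫ - Θq * ⟪p t - q t, ξ (q t)⟫ := by
    rw [inner_sub_right, real_inner_smul_right, real_inner_smul_right]
  have hΘp : Θp = ⟪p t - q t, ξ (p t)⟫ / ‖p t - q t‖ := thetaP_eq_inner_div ξ (p t) (q t)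
  have hΘq : Θq = ⟪p t - q t, ξ (q t)⟫ / ‖p t - q t‖ := thetaQ_eq_inner_div ξ (p t) (q t)
  rw [hξ', hℓ', real_inner_smul_right, inner_neg_left, real_inner_smul_left, hΘp, hΘq]
  field_simp
  ring

section Flow

variable {S : Set (Euc 2)} {T : Euc 2 → Submodule ℝ (Euc 2)} {ξ : Euc 2 → Euc 2}
  {κ : Euc 2 → ℝ} {Tm : ℝ≥0∞} {p q : ℝ → Euc 2} {t : ℝ}

theorem IsCSFOn.hasDerivWithinAt_thetaP (hflow : IsCSFOn S T (csfDomain Tm) p q)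
    (hS : IsSubmanifold 2 1 S T) (hξT : ∀ x ∈ S, ξ x ∈ T x) (hξ : ∀ x ∈ S, ‖ξ x‖ = 1)
    (hκ : ∀ x ∈ S, ∃ dξ : Euc 2 →L[ℝ] Euc 2,
      HasFDerivWithinAt ξ dξ S x ∧ κ x = ⟪dξ (ξ x), Jrot (ξ x)⟫)
    (ht : t ∈ csfDomain Tm) :
    HasDerivWithinAt (fun τ => thetaP ξ (p τ) (q τ))
      (κ (p t) * ⟪-(‖p t - q t‖⁻¹ • (p t - q t)), Jrot (ξ (p t))⟫ * thetaP ξ (p t) (q t)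
        + ‖p t - q t‖⁻¹ * (thetaP ξ (p t) (q t) *
            (thetaP ξ (p t) (q t) ^ 2 + thetaQ ξ (p t) (q t) ^ 2)
          - thetaP ξ (p t) (q t) - ⟪ξ (p t), ξ (q t)⟫ * thetaQ ξ (p t) (q t)))
      (csfDomain Tm) t := by
  have hconormal : ∀ x ∈ S, ∀ y, conormalT T x y = thetaP ξ x y • ξ x := fun x hx =>
    conormalT_eq_thetaP_smul
      (hS.tangent_eq_span hx (hξT x hx) (norm_ne_zero_iff.1 ((hξ x hx).symm ▸ one_ne_zero)))
      (hξ x hx)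
  obtain ⟨hpS, hqS, hpq, hp, hq⟩ := hflow t ht
  rw [hconormal _ hpS, ← neg_smul] at hp
  rw [hconormal _ hqS, ← neg_smul] at hq
  exact _root_.hasDerivWithinAt_thetaP hp hq
    (hasDerivWithinAt_comp_of_curvature hξ hκ hp (fun τ hτ => (hflow τ hτ).1)
      (uniqueDiffWithinAt_csfDomain ht) ht) (hξ _ hpS) hpq

theorem IsCSFOn.hasDerivWithinAt_thetaQ (hflow : IsCSFOn S T (csfDomain Tm) p q)
    (hS : IsSubmanifold 2 1 S T) (hξT : ∀ x ∈ S, ξ x ∈ T x) (hξ : ∀ x ∈ S, ‖ξ x‖ = 1)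
    (hκ : ∀ x ∈ S, ∃ dξ : Euc 2 →L[ℝ] Euc 2,
      HasFDerivWithinAt ξ dξ S x ∧ κ x = ⟪dξ (ξ x), Jrot (ξ x)⟫)
    (ht : t ∈ csfDomain Tm) :
    HasDerivWithinAt (fun τ => thetaQ ξ (p τ) (q τ))
      (κ (q t) * ⟪-(‖q t - p t‖⁻¹ • (q t - p t)), Jrot (ξ (q t))⟫ * thetaQ ξ (p t) (q t)
        + ‖p t - q t‖⁻¹ * (thetaQ ξ (p t) (q t) *
            (thetaP ξ (p t) (q t) ^ 2 + thetaQ ξ (p t) (q t) ^ 2)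
          - thetaQ ξ (p t) (q t) - ⟪ξ (p t), ξ (q t)⟫ * thetaP ξ (p t) (q t)))
      (csfDomain Tm) t := by
  have hswap := (hflow.swap.hasDerivWithinAt_thetaP hS hξT hξ hκ ht).neg
  have hP : thetaP ξ (p t) (q t) = -thetaQ ξ (q t) (p t) := (neg_neg _).symm
  refine hswap.congr_deriv ?_
  have hQ : thetaQ ξ (p t) (q t) = -thetaP ξ (q t) (p t) := rfl
  rw [hP, hQ, norm_sub_rev (q t), real_inner_comm (ξ (p t))]
  ring

end Flow

theorem chord_statement_14_general
    (Ω : Set (Euc 2))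
    (T : Euc 2 → Submodule ℝ (Euc 2)) (hsub : IsSubmanifold 2 1 (frontier Ω) T)
    (ξ : Euc 2 → Euc 2)
    (hξ : ∀ x ∈ frontier Ω, ξ x ∈ T x ∧ ‖ξ x‖ = 1 ∧
      ∃ ε : ℝ, 0 < ε ∧ ∀ s : ℝ, 0 < s → s < ε → x + s • Jrot (ξ x) ∈ interior Ω)
    (κ : Euc 2 → ℝ)
    (hκ : ∀ x ∈ frontier Ω, ∃ dξ : Euc 2 →L[ℝ] Euc 2,
      HasFDerivWithinAt ξ dξ (frontier Ω) x ∧ κ x = ⟪dξ (ξ x), Jrot (ξ x)⟫)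
    (Tm : ℝ≥0∞) (p q : ℝ → Euc 2)
    (hflow : IsCSFOn (frontier Ω) T (csfDomain Tm) p q) :
    ∀ t ∈ csfDomain Tm,
      HasDerivWithinAt (fun s => thetaP ξ (p s) (q s) ^ 2 + thetaQ ξ (p s) (q s) ^ 2)
        (2 * ((‖p t - q t‖ / 2) * ⟪ξ (p t), ξ (q t)⟫ *
              (2 * (thetaP ξ (p t) (q t) - thetaQ ξ (p t) (q t)) ^ 2 / ‖p t - q t‖ ^ 2)
            + κ (p t) * ⟪-(‖p t - q t‖⁻¹ • (p t - q t)), Jrot (ξ (p t))⟫ *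
                thetaP ξ (p t) (q t) ^ 2
            + κ (q t) * ⟪-(‖q t - p t‖⁻¹ • (q t - p t)), Jrot (ξ (q t))⟫ *
                thetaQ ξ (p t) (q t) ^ 2
            + ‖p t - q t‖⁻¹ *
                ((thetaP ξ (p t) (q t) ^ 2 + thetaQ ξ (p t) (q t) ^ 2)
                  - 1 - ⟪ξ (p t), ξ (q t)⟫) *
                (thetaP ξ (p t) (q t) ^ 2 + thetaQ ξ (p t) (q t) ^ 2)))
        (csfDomain Tm) t := by
  intro t ht
  have hξT : ∀ x ∈ frontier Ω, ξ x ∈ T x := fun x hx => (hξ x hx).1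
  have hξ1 : ∀ x ∈ frontier Ω, ‖ξ x‖ = 1 := fun x hx => (hξ x hx).2.1
  have hP := hflow.hasDerivWithinAt_thetaP hsub hξT hξ1 hκ ht
  have hQ := hflow.hasDerivWithinAt_thetaQ hsub hξT hξ1 hκ ht
  have hℓ0 : ‖p t - q t‖ ≠ 0 := norm_ne_zero_iff.2 (sub_ne_zero.2 (hflow t ht).2.2.1)
  refine ((hP.pow 2).add (hQ.pow 2)).congr_deriv ?_
  field_simp
  ring

/-- **Evolution of `‖Θ‖² = Θ(p)² + Θ(q)²`** under the chord shortening flow relative to the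
smooth boundary of a compact connected planar region:
`(1/2) d/dt ‖Θ‖² = (ℓ/2)⟨ξ(p),ξ(q)⟩‖Δ^{1/2}Θ‖² + k(p)⟨-η(p),ν(p)⟩Θ(p)²
  + k(q)⟨-η(q),ν(q)⟩Θ(q)² + (1/ℓ)(‖Θ‖² - 1 - ⟨ξ(p),ξ(q)⟩)‖Θ‖²`,
where `‖Δ^{1/2}Θ‖² = 2(Θ(p) - Θ(q))²/ℓ²`. -/
theorem chord_statement_14
    (Ω : Set (Euc 2)) (hcpt : IsCompact Ω) (hconn : IsConnected Ω)
    (hreg : Ω = closure (interior Ω))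
    (T : Euc 2 → Submodule ℝ (Euc 2)) (hsub : IsSubmanifold 2 1 (frontier Ω) T)
    (ξ : Euc 2 → Euc 2)
    (hξ : ∀ x ∈ frontier Ω, ξ x ∈ T x ∧ ‖ξ x‖ = 1 ∧
      ∃ ε : ℝ, 0 < ε ∧ ∀ s : ℝ, 0 < s → s < ε → x + s • Jrot (ξ x) ∈ interior Ω)
    (κ : Euc 2 → ℝ)
    (hκ : ∀ x ∈ frontier Ω, ∃ dξ : Euc 2 →L[ℝ] Euc 2,
      HasFDerivWithinAt ξ dξ (frontier Ω) x ∧ κ x = ⟪dξ (ξ x), Jrot (ξ x)⟫)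
    (Tm : ℝ≥0∞) (p q : ℝ → Euc 2)
    (hflow : IsCSFOn (frontier Ω) T (csfDomain Tm) p q) :
    ∀ t ∈ csfDomain Tm,
      HasDerivWithinAt (fun s => thetaP ξ (p s) (q s) ^ 2 + thetaQ ξ (p s) (q s) ^ 2)
        (2 * ((‖p t - q t‖ / 2) * ⟪ξ (p t), ξ (q t)⟫ *
              (2 * (thetaP ξ (p t) (q t) - thetaQ ξ (p t) (q t)) ^ 2 / ‖p t - q t‖ ^ 2)
            + κ (p t) * ⟪-(‖p t - q t‖⁻¹ • (p t - q t)), Jrot (ξ (p t))⟫ *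
                thetaP ξ (p t) (q t) ^ 2
            + κ (q t) * ⟪-(‖q t - p t‖⁻¹ • (q t - p t)), Jrot (ξ (q t))⟫ *
                thetaQ ξ (p t) (q t) ^ 2
            + ‖p t - q t‖⁻¹ *
                ((thetaP ξ (p t) (q t) ^ 2 + thetaQ ξ (p t) (q t) ^ 2)
                  - 1 - ⟪ξ (p t), ξ (q t)⟫) *
                (thetaP ξ (p t) (q t) ^ 2 + thetaQ ξ (p t) (q t) ^ 2)))
        (csfDomain Tm) t :=
  chord_statement_14_general Ω T hsub ξ hξ κ hκ Tm p q hflow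

end
end
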